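/- arXiv:2310.17716 — 3 statements merged into one kernel-verified Lean document; each statement's English description precedes it below -/
import Mathlib

section
/- Let V be a normed vector space over ℝ or ℂ with dual space V*, dual norm ‖·‖* and induced distance d*(x,y) = (1/2)‖x−y‖*. Let ε, τ > 0 and let z, x ∈ V* with d*(x,z) ≥ ε + τ/2. Then for any probability measure μ on V*, Pr_{y∼μ}[d*(x,y) < ε] ≤ sup_{v : ‖v‖≤1} Pr_{y∼μ}[|y(v) − z(v)| > τ]. -/
open MeasureTheory Set

/-! For a unit vector `v` on which `x - z` nearly attains its norm, every `y` in the `ε`-ball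
around `x` satisfies `‖y v - z v‖ ≥ ‖x v - z v‖ - ‖x - y‖ > τ`, so the ball is contained in the
event measured at `v`. Since the norm need only be approximately attained, this is done for the
slightly smaller balls of radius `ε - δ`, and continuity of `μ` from below recovers the open
`ε`-ball. -/

lemma measureReal_setOf_lt_le_of_forall_pos {α : Type*} [MeasurableSpace α] {μ : Measure α}
    [IsFiniteMeasure μ] {f : α → ℝ} {c S : ℝ}
    (h : ∀ δ > 0, μ.real {a | f a < c - δ} ≤ S) : μ.real {a | f a < c} ≤ S := by
  set s : ℕ → Set α := fun n ↦ {a | f a < c - 1 / (n + 1)}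
  have hS : 0 ≤ S := measureReal_nonneg.trans (h 1 one_pos)
  have hs_mono : Monotone s := fun m n hmn a (ha : f a < _) ↦ by
    change f a < _
    have : (1 : ℝ) / (n + 1) ≤ 1 / (m + 1) := by gcongr
    linarith
  have hs_union : {a | f a < c} = ⋃ n, s n := by
    ext a
    simp only [s, mem_ofPred_eq, mem_iUnion]
    constructor
    · intro ha
      obtain ⟨n, hn⟩ := exists_nat_one_div_lt (sub_pos.2 ha)
      exact ⟨n, by linarith⟩
    · rintro ⟨n, hn⟩
      have : (0 : ℝ) < 1 / (n + 1) := Nat.one_div_pos_of_nat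
      linarith
  have hs_le : ∀ n, μ (s n) ≤ ENNReal.ofReal S := fun n ↦
    (ENNReal.le_ofReal_iff_toReal_le (measure_ne_top μ _) hS).2 (h _ Nat.one_div_pos_of_nat)
  rw [hs_union, Measure.real, hs_mono.measure_iUnion]
  exact ENNReal.toReal_le_of_le_ofReal hS (iSup_le hs_le)

lemma ContinuousLinearMap.norm_sub_apply_le_of_norm_le_one {𝕜 E F : Type*}
    [NontriviallyNormedField 𝕜] [SeminormedAddCommGroup E] [SeminormedAddCommGroup F]
    [NormedSpace 𝕜 E] [NormedSpace 𝕜 F] (x y z : E →L[𝕜] F) {v : E} (hv : ‖v‖ ≤ 1) :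
    ‖x v - z v‖ ≤ ‖x - y‖ + ‖y v - z v‖ :=
  calc ‖x v - z v‖ = ‖(x - y) v + (y v - z v)‖ := by
        rw [sub_apply, sub_add_sub_cancel]
    _ ≤ ‖(x - y) v‖ + ‖y v - z v‖ := norm_add_le _ _
    _ ≤ ‖x - y‖ + ‖y v - z v‖ := by
        gcongr
        simpa using (x - y).le_opNorm_of_le hv

theorem far_from_fixed_functional_general {𝕜 V : Type*} [RCLike 𝕜] [NormedAddCommGroup V]
    [NormedSpace 𝕜 V]
    [MeasurableSpace (StrongDual 𝕜 V)]
    (μ : Measure (StrongDual 𝕜 V)) [IsProbabilityMeasure μ]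
    (ε τ : ℝ)
    (x z : StrongDual 𝕜 V)
    (hfar : ε + τ / 2 ≤ (1 / 2) * ‖x - z‖) :
    (μ {y | (1 / 2) * ‖x - y‖ < ε}).toReal ≤
      ⨆ v ∈ Metric.closedBall (0 : V) 1, (μ {y | τ < ‖y v - z v‖}).toReal := by
  have hbdd : BddAbove (⋃ v, range fun (_ : v ∈ Metric.closedBall (0 : V) 1) ↦
      μ.real {y | τ < ‖y v - z v‖}) :=
    ⟨1, by rintro _ ⟨_, ⟨v, rfl⟩, _, rfl⟩; exact measureReal_le_one⟩
  refine measureReal_setOf_lt_le_of_forall_pos fun δ hδ ↦ ?_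
  obtain ⟨v, hv, hxzv⟩ := (x - z).exists_lt_apply_of_lt_opNorm
    (show ‖x - z‖ - 2 * δ < ‖x - z‖ by linarith)
  have hsub : {y | (1 / 2) * ‖x - y‖ < ε - δ} ⊆ {y | τ < ‖y v - z v‖} := fun y hy ↦ by
    have := x.norm_sub_apply_le_of_norm_le_one y z hv.le
    rw [mem_ofPred_eq, sub_apply] at *
    linarith
  calc μ.real {y | (1 / 2) * ‖x - y‖ < ε - δ} ≤ μ.real {y | τ < ‖y v - z v‖} :=
        measureReal_mono hsub
    _ ≤ _ := le_ciSup₂ hbdd v (mem_closedBall_zero_iff.2 hv.le)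

/-- "Far from a fixed functional": if `d*(x,z) ≥ ε + τ/2` (with `d*(a,b) = (1/2)‖a-b‖`
the distance induced by the dual norm) then the `μ`-mass of the `ε`-ball around `x`
is at most the maximally distinguishable fraction from `z` with tolerance `τ`. -/
theorem far_from_fixed_functional {𝕜 V : Type*} [RCLike 𝕜] [NormedAddCommGroup V]
    [NormedSpace 𝕜 V] [FiniteDimensional 𝕜 V]
    [MeasurableSpace (StrongDual 𝕜 V)]
    (μ : Measure (StrongDual 𝕜 V)) [IsProbabilityMeasure μ]
    (ε τ : ℝ) (hε : 0 < ε) (hτ : 0 < τ)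
    (x z : StrongDual 𝕜 V)
    (hfar : ε + τ / 2 ≤ (1 / 2) * ‖x - z‖) :
    (μ {y | (1 / 2) * ‖x - y‖ < ε}).toReal ≤
      ⨆ v ∈ Metric.closedBall (0 : V) 1, (μ {y | τ < ‖y v - z v‖}).toReal :=
  far_from_fixed_functional_general μ ε τ x z hfar
end

section
/- Let V be a normed vector space with dual V* and d*(x,y) = (1/2)‖x−y‖*. Let ε, τ > 0, z ∈ V* and μ a probability measure on V*. Then for every x ∈ V*: Pr_{y∼μ}[d*(x,y) < ε] ≤ max{ sup_{‖v‖≤1} Pr_{y∼μ}[|y(v)−z(v)| > τ], Pr_{y∼μ}[d*(y,z) < 2ε + τ/2] }. -/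
/-!
If `d*(x, z) < ε + τ/2`, the triangle inequality puts the `ε`-ball around `x` inside the
`(2ε + τ/2)`-ball around `z`. Otherwise `‖x - z‖ ≥ 2ε + τ`, and in finite dimension this norm is
attained at some `v` in the unit ball; every `y` with `‖x - y‖ < 2ε` then has
`‖y v - z v‖ > τ`, so the `ε`-ball around `x` has at most the mass distinguishing `z` along `v`.
-/

open MeasureTheory Metric Set

namespace ContinuousLinearMap

theorem exists_norm_le_one_norm_apply_eq_opNorm {𝕜 E F : Type*} [DenselyNormedField 𝕜]
    [NormedAddCommGroup E] [NormedSpace 𝕜 E] [ProperSpace E] [SeminormedAddCommGroup F]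
    [NormedSpace 𝕜 F] (f : E →L[𝕜] F) :
    ∃ v : E, ‖v‖ ≤ 1 ∧ ‖f v‖ = ‖f‖ := by
  have hcompact : IsCompact ((fun v => ‖f v‖) '' closedBall 0 1) :=
    (isCompact_closedBall 0 1).image (by fun_prop)
  obtain ⟨v, hv, hfv⟩ := f.sSup_unitClosedBall_eq_norm ▸
    hcompact.sSup_mem ((nonempty_closedBall.2 zero_le_one).image _)
  exact ⟨v, mem_closedBall_zero_iff.1 hv, hfv⟩

theorem lt_norm_sub_apply_of_norm_sub_lt {𝕜 E F : Type*} [NontriviallyNormedField 𝕜]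
    [SeminormedAddCommGroup E] [NormedSpace 𝕜 E] [SeminormedAddCommGroup F] [NormedSpace 𝕜 F]
    {x y z : E →L[𝕜] F} {v : E} (hv : ‖v‖ ≤ 1)
    {a τ : ℝ} (hxz : a + τ ≤ ‖(x - z) v‖) (hxy : ‖x - y‖ < a) : τ < ‖y v - z v‖ := by
  have hsplit : (x - z) v = (x - y) v + (y v - z v) := by simp
  have hxyv : ‖(x - y) v‖ ≤ ‖x - y‖ := (x - y).unit_le_opNorm v hv
  have htri := hsplit ▸ norm_add_le ((x - y) v) (y v - z v)
  linarith

end ContinuousLinearMap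

theorem ball_mass_le_max_general {𝕜 V : Type*} [RCLike 𝕜] [NormedAddCommGroup V]
    [NormedSpace 𝕜 V] [FiniteDimensional 𝕜 V]
    [MeasurableSpace (StrongDual 𝕜 V)]
    (μ : Measure (StrongDual 𝕜 V)) [IsProbabilityMeasure μ]
    (ε τ : ℝ)
    (z : StrongDual 𝕜 V) :
    ∀ x : StrongDual 𝕜 V,
      (μ {y | (1 / 2) * ‖x - y‖ < ε}).toReal ≤
        max (⨆ v ∈ Metric.closedBall (0 : V) 1, (μ {y | τ < ‖y v - z v‖}).toReal)
          ((μ {y | (1 / 2) * ‖y - z‖ < 2 * ε + τ / 2}).toReal) := by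
  intro x
  by_cases hxz : (1 / 2) * ‖x - z‖ < ε + τ / 2
  · refine le_max_of_le_right (measureReal_mono fun y (hy : (1 / 2) * ‖x - y‖ < ε) => ?_)
    show (1 / 2) * ‖y - z‖ < 2 * ε + τ / 2
    linarith [norm_sub_le_norm_sub_add_norm_sub y x z, norm_sub_rev x y]
  · have := FiniteDimensional.proper 𝕜 V
    obtain ⟨v, hv, hxzv⟩ := (x - z).exists_norm_le_one_norm_apply_eq_opNorm
    have hfar : {y | (1 / 2) * ‖x - y‖ < ε} ⊆ {y | τ < ‖y v - z v‖} :=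
      fun y (hy : (1 / 2) * ‖x - y‖ < ε) =>
        ContinuousLinearMap.lt_norm_sub_apply_of_norm_sub_lt hv (a := 2 * ε) (by linarith)
          (by linarith)
    have hbdd : BddAbove (⋃ w : V, range fun _ : w ∈ closedBall (0 : V) 1 =>
        μ.real {y | τ < ‖y w - z w‖}) := by
      refine ⟨1, ?_⟩
      rintro _ ⟨_, ⟨w, rfl⟩, ⟨_, rfl⟩⟩
      exact measureReal_le_one
    exact le_max_of_le_left
      ((measureReal_mono hfar).trans (le_ciSup₂ hbdd v (mem_closedBall_zero_iff.2 hv)))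

/-- The mass of any `ε`-ball (w.r.t. the induced dual distance `d*(a,b) = (1/2)‖a-b‖`)
is bounded by the maximum of the maximally distinguishable fraction from `z` and the
mass of the `(2ε + τ/2)`-ball around `z`. -/
theorem ball_mass_le_max {𝕜 V : Type*} [RCLike 𝕜] [NormedAddCommGroup V]
    [NormedSpace 𝕜 V] [FiniteDimensional 𝕜 V]
    [MeasurableSpace (StrongDual 𝕜 V)]
    (μ : Measure (StrongDual 𝕜 V)) [IsProbabilityMeasure μ]
    (ε τ : ℝ) (hε : 0 < ε) (hτ : 0 < τ)
    (z : StrongDual 𝕜 V) :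
    ∀ x : StrongDual 𝕜 V,
      (μ {y | (1 / 2) * ‖x - y‖ < ε}).toReal ≤
        max (⨆ v ∈ Metric.closedBall (0 : V) 1, (μ {y | τ < ‖y v - z v‖}).toReal)
          ((μ {y | (1 / 2) * ‖y - z‖ < 2 * ε + τ / 2}).toReal) :=
  ball_mass_le_max_general μ ε τ z
end

section
/- Let Θ be a set, 𝓛 a set of functions l: Θ → [0,1], μ a probability measure on 𝓛, and for each l let Z(l) ⊆ Θ be its solution set. Suppose a deterministic algorithm, making q queries, each answered by a value within τ of l(θ) at a queried point θ, outputs a correct solution for a μ-fraction β of loss functions l. Then for every reference function g: Θ → [0,1]: q ≥ (β − sup_{θ∈Θ} Pr_{l∼μ}[θ ∈ Z(l)]) / (sup_{θ∈Θ} Pr_{l∼μ}[|l(θ) − g(θ)| > τ]). Abstractly: given a finite sequence of query points x₁,…,x_q and an output t determined by g-consistent answers, any l in the success set with t ∉ Z(l) must satisfy |l(x_i) − g(x_i)| > τ for some i; hence β − sup_t μ(Z_t) ≤ q · sup_x Pr_{l∼μ}[|l(x) − g(x)| > τ]. -/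
open MeasureTheory

lemma measureReal_le_add_sum_of_subset_union {α ι : Type*} [MeasurableSpace α] [Fintype ι]
    {μ : Measure α} [IsFiniteMeasure μ] {S A : Set α} {B : ι → Set α}
    (h : S ⊆ A ∪ ⋃ i, B i) : μ.real S ≤ μ.real A + ∑ i, μ.real (B i) :=
  calc μ.real S ≤ μ.real (A ∪ ⋃ i, B i) := measureReal_mono h
    _ ≤ μ.real A + μ.real (⋃ i, B i) := measureReal_union_le _ _
    _ ≤ μ.real A + ∑ i, μ.real (B i) := by gcongr; exact measureReal_iUnion_fintype_le _

lemma bddAbove_range_measureReal {α ι : Type*} [MeasurableSpace α] (μ : Measure α)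
    [IsZeroOrProbabilityMeasure μ] (s : ι → Set α) :
    BddAbove (Set.range fun i => μ.real (s i)) :=
  ⟨1, Set.forall_mem_range.2 fun _ => measureReal_le_one⟩

lemma sum_comp_le_card_mul_ciSup {ι Θ : Type*} [Fintype ι] {f : Θ → ℝ}
    (hf : BddAbove (Set.range f)) (x : ι → Θ) :
    ∑ i, f (x i) ≤ Fintype.card ι * ⨆ θ, f θ := by
  simpa using Finset.sum_le_card_nsmul Finset.univ (f ∘ x) _ fun i _ => le_ciSup hf (x i)

theorem loss_learning_lower_bound_general {Θ : Type*}
    (μ : Measure (Θ → ℝ)) [IsProbabilityMeasure μ]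
    (Z : (Θ → ℝ) → Set Θ) (g : Θ → ℝ) (τ β : ℝ)
    (q : ℕ) (x : Fin q → Θ) (t : Θ)
    (S : Set (Θ → ℝ)) (hβ : β ≤ (μ S).toReal)
    (hdist : ∀ l ∈ S, t ∉ Z l → ∃ i : Fin q, τ < |l (x i) - g (x i)|) :
    β - ⨆ t' : Θ, (μ {l | t' ∈ Z l}).toReal ≤
      (q : ℝ) * ⨆ θ : Θ, (μ {l | τ < |l θ - g θ|}).toReal := by
  simp only [← measureReal_def] at hβ ⊢
  have hcover : S ⊆ {l | t ∈ Z l} ∪ ⋃ i, {l | τ < |l (x i) - g (x i)|} := by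
    intro l hl
    by_cases ht : t ∈ Z l
    · exact Or.inl ht
    · exact Or.inr (Set.mem_iUnion.2 (hdist l hl ht))
  have hsolution := le_ciSup (bddAbove_range_measureReal μ fun t' => {l | t' ∈ Z l}) t
  have hqueries := sum_comp_le_card_mul_ciSup
    (bddAbove_range_measureReal μ fun θ => {l | τ < |l θ - g θ|}) x
  rw [Fintype.card_fin] at hqueries
  linarith [measureReal_le_add_sum_of_subset_union (μ := μ) hcover]

/-- Deterministic average-case lower bound for parametrized (loss-function) learning,
combinatorial core: if a deterministic algorithm making `q` τ-accurate queries
succeeds on a set `S` of loss functions of measure at least `β`, where the query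
points `x₁,…,x_q` and the output `t` are those generated by answering every query
according to `g`, and every `l ∈ S` with `t ∉ Z(l)` is τ-distinguished from `g` at
some query point, then
`β − sup_{t'} Pr_{l∼μ}[t' ∈ Z(l)] ≤ q · sup_θ Pr_{l∼μ}[|l(θ) − g(θ)| > τ]`. -/
theorem loss_learning_lower_bound {Θ : Type*}
    (μ : Measure (Θ → ℝ)) [IsProbabilityMeasure μ]
    (hrange : ∀ᵐ l ∂μ, ∀ θ, l θ ∈ Set.Icc (0 : ℝ) 1)
    (Z : (Θ → ℝ) → Set Θ) (g : Θ → ℝ) (τ β : ℝ) (hτ : 0 < τ)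
    (q : ℕ) (x : Fin q → Θ) (t : Θ)
    (S : Set (Θ → ℝ)) (hβ : β ≤ (μ S).toReal)
    (hdist : ∀ l ∈ S, t ∉ Z l → ∃ i : Fin q, τ < |l (x i) - g (x i)|) :
    β - ⨆ t' : Θ, (μ {l | t' ∈ Z l}).toReal ≤
      (q : ℝ) * ⨆ θ : Θ, (μ {l | τ < |l θ - g θ|}).toReal :=
  loss_learning_lower_bound_general μ Z g τ β q x t S hβ hdist
end
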